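/- arXiv:1104.3463 — 4 statements merged into one kernel-verified Lean document; each statement's English description precedes it below -/
import Mathlib

section
/- Let G be a finite simple graph on n ≥ 3 vertices. Then G is not in BP2 if and only if the complement Ḡ is connected, Ḡ has no cut vertex, and every vertex cut of Ḡ (if any) induces a connected subgraph of Ḡ. -/
/-- The induced subgraph of `G` on the vertex set `s` is covered by a single biclique. -/
def BP1On {V : Type*} (G : SimpleGraph V) (s : Set V) : Prop :=
  (∃ v, s = {v}) ∨
    ∃ A B : Set V, A.Nonempty ∧ B.Nonempty ∧ Disjoint A B ∧ A ∪ B = s ∧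
      ∀ a ∈ A, ∀ b ∈ B, G.Adj a b

/-- The induced subgraph of `G` on `s` can be partitioned into at most two parts,
each of which induces a graph in BP1. -/
def BP2On {V : Type*} (G : SimpleGraph V) (s : Set V) : Prop :=
  BP1On G s ∨
    ∃ A B : Set V, A.Nonempty ∧ B.Nonempty ∧ Disjoint A B ∧ A ∪ B = s ∧
      BP1On G A ∧ BP1On G B

/-!
A vertex set `s` with at least two elements is covered by a biclique exactly when `Gᶜ` induced on
`s` is disconnected: the two sides of a biclique are separated in `Gᶜ`, and conversely a component
of `Gᶜ[s]` and the rest of `s` are the two sides of a biclique of `G`. Hence a BP2 partition of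
`V` is a single part with `Gᶜ` disconnected, or a singleton `{v}` with `Gᶜ - v` disconnected, or
two complementary parts `X`, `Xᶜ` that are both disconnected in `Gᶜ`; with at least three vertices
the parts cannot both be singletons.
-/

open SimpleGraph

namespace SimpleGraph

variable {V : Type*}

lemma induce_preconnected_iff_forall_partition (H : SimpleGraph V) {s : Set V} :
    (H.induce s).Preconnected ↔
      ∀ A B : Set V, A.Nonempty → B.Nonempty → Disjoint A B → A ∪ B = s →
        ∃ a ∈ A, ∃ b ∈ B, H.Adj a b := by
  constructor
  · rintro hpre A B ⟨a, ha⟩ ⟨b, hb⟩ hdisj rfl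
    obtain ⟨w⟩ := hpre ⟨a, Or.inl ha⟩ ⟨b, Or.inr hb⟩
    obtain ⟨d, -, hdA, hdB⟩ :=
      w.exists_boundary_dart (Subtype.val ⁻¹' A) ha (hdisj.notMem_of_mem_right hb)
    exact ⟨d.fst, hdA, d.snd, d.snd.2.resolve_left hdB, d.adj⟩
  · intro hpart u v
    by_contra huv
    let A : Set V := {x | ∃ hx : x ∈ s, (H.induce s).Reachable u ⟨x, hx⟩}
    have hAs : A ⊆ s := fun x hx => hx.1
    obtain ⟨a, ⟨has, hua⟩, b, ⟨hbs, hbA⟩, hab⟩ :=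
      hpart A (s \ A) ⟨u, u.2, .rfl⟩ ⟨v, v.2, fun ⟨_, hv⟩ => huv hv⟩ Set.disjoint_sdiff_right
        (Set.union_sdiff_cancel hAs)
    exact hbA ⟨hbs, hua.trans (show (H.induce s).Adj ⟨a, has⟩ ⟨b, hbs⟩ from hab).reachable⟩

end SimpleGraph

section

variable {V : Type*} (G : SimpleGraph V)

lemma bp1On_iff {s : Set V} (hs : s.Nonempty) :
    BP1On G s ↔ (∃ v, s = {v}) ∨ ¬ (Gᶜ.induce s).Connected := by
  have : Nonempty s := hs.coe_sort
  rw [connected_iff, induce_preconnected_iff_forall_partition]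
  simp only [this, and_true, not_forall, not_exists, not_and, exists_prop]
  refine or_congr_right (exists₂_congr fun A B => ?_)
  refine ⟨fun ⟨hA, hB, hdisj, hAB, hadj⟩ => ⟨hA, hB, hdisj, hAB, fun a ha b hb hc => ?_⟩,
    fun ⟨hA, hB, hdisj, hAB, hadj⟩ => ⟨hA, hB, hdisj, hAB, fun a ha b hb => ?_⟩⟩
  · exact hc.2 (hadj a ha b hb)
  · by_contra hG
    exact hadj a ha b hb ⟨hdisj.ne_of_mem ha hb, hG⟩

lemma bp2On_univ_iff :
    BP2On G Set.univ ↔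
      BP1On G Set.univ ∨ ∃ X : Set V, X.Nonempty ∧ Xᶜ.Nonempty ∧ BP1On G X ∧ BP1On G Xᶜ := by
  refine or_congr_right ⟨?_, ?_⟩
  · rintro ⟨A, B, hA, hB, hdisj, hAB, hbA, hbB⟩
    obtain rfl : B = Aᶜ := IsCompl.eq_compl ⟨hdisj.symm, codisjoint_iff.2 (by rwa [sup_comm])⟩
    exact ⟨A, hA, hB, hbA, hbB⟩
  · rintro ⟨X, hX, hXc, hbX, hbXc⟩
    exact ⟨X, Xᶜ, hX, hXc, disjoint_compl_right, Set.union_compl_self X, hbX, hbXc⟩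

lemma univ_ne_pair [Fintype V] (h : 3 ≤ Fintype.card V) (a b : V) :
    (Set.univ : Set V) ≠ {a, b} := by
  intro he
  have hcard := Set.ncard_insert_le a {b}
  rw [← he, Set.ncard_univ, Nat.card_eq_fintype_card, Set.ncard_singleton] at hcard
  omega

lemma bp2On_univ_of_not_connected [Nonempty V] (hG : ¬ Gᶜ.Connected) : BP2On G Set.univ :=
  .inl <| (bp1On_iff G Set.univ_nonempty).2 <| .inr (mt (induceUnivIso Gᶜ).connected_iff.1 hG)

lemma bp2On_univ_of_not_connected_induce_compl_singleton [Nontrivial V] (v : V)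
    (hv : ¬ (Gᶜ.induce ({v}ᶜ : Set V)).Connected) : BP2On G Set.univ :=
  (bp2On_univ_iff G).2 <| .inr ⟨{v}, Set.singleton_nonempty v, Set.nonempty_compl_of_nontrivial v,
    .inl ⟨v, rfl⟩, (bp1On_iff G (Set.nonempty_compl_of_nontrivial v)).2 (.inr hv)⟩

lemma bp2On_univ_of_not_connected_induce_of_compl [Nonempty V] {X : Set V}
    (hX : ¬ (Gᶜ.induce X).Connected) (hXc : ¬ (Gᶜ.induce Xᶜ).Connected) : BP2On G Set.univ := by
  have hconn := (induceUnivIso Gᶜ).connected_iff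
  rcases X.eq_empty_or_nonempty with rfl | hXne
  · rw [Set.compl_empty, hconn] at hXc
    exact bp2On_univ_of_not_connected G hXc
  rcases Xᶜ.eq_empty_or_nonempty with hXc0 | hXcne
  · rw [Set.compl_empty_iff.mp hXc0, hconn] at hX
    exact bp2On_univ_of_not_connected G hX
  exact (bp2On_univ_iff G).2 <| .inr
    ⟨X, hXne, hXcne, (bp1On_iff G hXne).2 (.inr hX), (bp1On_iff G hXcne).2 (.inr hXc)⟩

lemma not_bp2On_univ_of_forall_connected [Fintype V] (h : 3 ≤ Fintype.card V)
    (hconn : Gᶜ.Connected) (hcut : ∀ v : V, (Gᶜ.induce ({v}ᶜ : Set V)).Connected)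
    (hsep : ∀ X : Set V, ¬ (Gᶜ.induce Xᶜ).Connected → (Gᶜ.induce X).Connected) :
    ¬ BP2On G Set.univ := by
  have := hconn.nonempty
  have hpair := univ_ne_pair h
  have bp1 {s : Set V} (hs : s.Nonempty) := bp1On_iff G hs
  rw [bp2On_univ_iff, bp1 Set.univ_nonempty, (induceUnivIso Gᶜ).connected_iff]
  rintro ((⟨v, hv⟩ | hdisc) | ⟨X, hX, hXc, hbX, hbXc⟩)
  · exact hpair v v (by simpa using hv)
  · exact hdisc hconn
  rcases (bp1 hX).mp hbX with ⟨a, rfl⟩ | hdX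
  · obtain ⟨b, hb⟩ := ((bp1 hXc).mp hbXc).resolve_right (not_not.2 (hcut a))
    exact hpair a b (by rw [← Set.union_compl_self {a}, hb, Set.singleton_union])
  rcases (bp1 hXc).mp hbXc with ⟨b, hb⟩ | hdXc
  · exact hdX (by rw [← compl_compl X, hb]; exact hcut b)
  · exact hdX (hsep X hdXc)

end

/-- A finite simple graph on at least three vertices is not in BP2 if and only if its
complement is connected, has no cut vertex, and every vertex cut of the complement
induces a connected subgraph of the complement. -/
theorem not_bp2_iff {V : Type*} [Fintype V] (G : SimpleGraph V)
    (h : 3 ≤ Fintype.card V) :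
    ¬ BP2On G Set.univ ↔
      (Gᶜ.Connected ∧
       (∀ v : V, (Gᶜ.induce ({v}ᶜ : Set V)).Connected) ∧
       (∀ X : Set V, ¬ (Gᶜ.induce Xᶜ).Connected → (Gᶜ.induce X).Connected)) := by
  have : Nontrivial V := Fintype.one_lt_card_iff_nontrivial.mp (by omega)
  refine ⟨fun hnot => ⟨?_, fun v => ?_, fun X hXc => ?_⟩,
    fun ⟨hconn, hcut, hsep⟩ => not_bp2On_univ_of_forall_connected G h hconn hcut hsep⟩ <;>
    by_contra hdisc <;> apply hnot
  · exact bp2On_univ_of_not_connected G hdisc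
  · exact bp2On_univ_of_not_connected_induce_compl_singleton G v hdisc
  · exact bp2On_univ_of_not_connected_induce_of_compl G hdisc hXc
end

section
/- Let G be a finite simple graph on at least 3 vertices that is not in BP2. Then for every vertex v, the set N_{Ḡ}(v) of neighbours of v in the complement graph Ḡ has at least two elements, and the subgraph of Ḡ induced on N_{Ḡ}(v) is connected. -/
/-!
Outside `N = N_{Ḡ}(v)` the vertex `v` is `G`-adjacent to everything else, so `V \ N` is
covered by the biclique `{v} | (V \ N) \ {v}`. As `G` is not in BP2, `N` is therefore nonempty
and not in BP1. A set of at most one vertex is in BP1, and so is a set `s` on which `Ḡ` is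
disconnected: a component `C` of `Ḡ[s]` and `s \ C` form a biclique of `G`.
-/

section

variable {V : Type*} (G : SimpleGraph V)

theorem bp1On_compl_neighborSet_compl (v : V) : BP1On G (Gᶜ.neighborSet v)ᶜ := by
  have hv : v ∈ (Gᶜ.neighborSet v)ᶜ := fun hv => Gᶜ.irrefl hv
  have hadj : ∀ b ∈ (Gᶜ.neighborSet v)ᶜ \ {v}, G.Adj v b := by
    rintro b ⟨hbN, hbv⟩
    by_contra hvb
    exact hbN ⟨Ne.symm hbv, hvb⟩
  rcases ((Gᶜ.neighborSet v)ᶜ \ {v}).eq_empty_or_nonempty with hempty | hrest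
  · refine Or.inl ⟨v, ?_⟩
    rw [Set.sdiff_eq_empty] at hempty
    exact hempty.antisymm (Set.singleton_subset_iff.mpr hv)
  · refine Or.inr ⟨{v}, _, Set.singleton_nonempty v, hrest, Set.disjoint_sdiff_right,
      Set.union_sdiff_cancel (Set.singleton_subset_iff.mpr hv), ?_⟩
    rintro a rfl b hb
    exact hadj b hb

variable {G}

theorem bp2On_univ_of_bp1On_compl {s : Set V} (hs : s.Nonempty) (hsc : sᶜ.Nonempty)
    (h : BP1On G s) (hc : BP1On G sᶜ) : BP2On G Set.univ :=
  Or.inr ⟨s, sᶜ, hs, hsc, disjoint_compl_right, Set.union_compl_self s, h, hc⟩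

theorem two_le_ncard_of_not_bp1On {s : Set V} (hfin : s.Finite) (hs : s.Nonempty)
    (h : ¬ BP1On G s) : 2 ≤ s.ncard := by
  by_contra hlt
  have hone : s.ncard = 1 := by
    have := (Set.ncard_pos hfin).mpr hs
    omega
  exact h (Or.inl (Set.ncard_eq_one.mp hone))

theorem bp1On_of_not_connected_induce_compl {s : Set V} (hs : s.Nonempty)
    (hconn : ¬ (Gᶜ.induce s).Connected) : BP1On G s := by
  have : Nonempty s := hs.to_subtype
  obtain ⟨a, b, hab⟩ : ∃ a b : s, ¬ (Gᶜ.induce s).Reachable a b := by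
    by_contra! hpre
    exact hconn ⟨hpre⟩
  set C : Set V := {z | ∃ hz : z ∈ s, (Gᶜ.induce s).Reachable a ⟨z, hz⟩}
  have hbC : (b : V) ∈ s \ C := ⟨b.2, fun ⟨_, hr⟩ => hab hr⟩
  have hcross : ∀ c ∈ C, ∀ d ∈ s \ C, G.Adj c d := by
    rintro c ⟨hcs, hac⟩ d ⟨hds, hdC⟩
    have hcd : c ≠ d := by
      rintro rfl
      exact hdC ⟨hcs, hac⟩
    by_contra hGcd
    have hadj : (Gᶜ.induce s).Adj ⟨c, hcs⟩ ⟨d, hds⟩ := ⟨hcd, hGcd⟩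
    exact hdC ⟨hds, hac.trans hadj.reachable⟩
  exact Or.inr ⟨C, s \ C, ⟨a, a.2, .rfl⟩, ⟨b, hbC⟩, Set.disjoint_sdiff_right,
    Set.union_sdiff_cancel fun _ hz => hz.1, hcross⟩

end

theorem compl_neighborSet_connected_general {V : Type*} [Fintype V] (G : SimpleGraph V)
    (h : ¬ BP2On G Set.univ) (v : V) :
    2 ≤ (Gᶜ.neighborSet v).ncard ∧ (Gᶜ.induce (Gᶜ.neighborSet v)).Connected := by
  set N := Gᶜ.neighborSet v
  have hNc : BP1On G Nᶜ := bp1On_compl_neighborSet_compl G v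
  have hN : N.Nonempty := by
    rcases N.eq_empty_or_nonempty with hempty | hne
    · exact (h (Or.inl (by simpa [hempty] using hNc))).elim
    · exact hne
  have hN1 : ¬ BP1On G N := fun hN1 =>
    h (bp2On_univ_of_bp1On_compl hN ⟨v, fun hv => Gᶜ.irrefl hv⟩ hN1 hNc)
  exact ⟨two_le_ncard_of_not_bp1On N.toFinite hN hN1,
    by_contra fun hconn => hN1 (bp1On_of_not_connected_induce_compl hN hconn)⟩

/-- If a finite simple graph `G` on at least three vertices is not in BP2, then for every
vertex `v`, the neighbourhood of `v` in the complement `Gᶜ` has at least two elements and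
induces a connected subgraph of `Gᶜ`. -/
theorem compl_neighborSet_connected {V : Type*} [Fintype V] (G : SimpleGraph V)
    (h3 : 3 ≤ Fintype.card V) (h : ¬ BP2On G Set.univ) (v : V) :
    2 ≤ (Gᶜ.neighborSet v).ncard ∧ (Gᶜ.induce (Gᶜ.neighborSet v)).Connected :=
  compl_neighborSet_connected_general G h v
end

section
/- Let G be a finite simple graph on at least 3 vertices that is not in BP2. Then in the complement graph Ḡ, every vertex is at distance at most two from every other vertex (i.e., Ḡ is connected with diameter at most 2). -/
/-!
Any two distinct vertices `u`, `w` have a common neighbour in `Gᶜ`. Otherwise the vertex set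
splits into the star of `G` centred at `u` (namely `u` and its `G`-neighbours other than `w`) and
its complement, which is a star of `G` centred at `w`: every vertex `x ≠ w` there is a
`Gᶜ`-neighbour of `u`, hence not a `Gᶜ`-neighbour of `w`. Two stars witness `G ∈ BP2`.
-/

namespace SimpleGraph

variable {V : Type*}

theorem exists_walk_length_le_two_of_exists_common_adj (H : SimpleGraph V)
    (hH : ∀ u w, u ≠ w → ∃ x, H.Adj u x ∧ H.Adj x w) (u w : V) :
    ∃ p : H.Walk u w, p.length ≤ 2 := by
  by_cases huw : u = w
  · subst huw
    exact ⟨Walk.nil, by simp⟩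
  obtain ⟨x, hux, hxw⟩ := hH u w huw
  exact ⟨.cons hux hxw.toWalk, by simp⟩

variable (G : SimpleGraph V)

theorem bp1On_of_forall_adj {s : Set V} {c : V} (hc : c ∈ s)
    (hadj : ∀ b ∈ s, b ≠ c → G.Adj c b) : BP1On G s := by
  by_cases hs : s = {c}
  · exact .inl ⟨c, hs⟩
  refine .inr ⟨{c}, s \ {c}, Set.singleton_nonempty c, ?_, Set.disjoint_sdiff_right,
    Set.union_sdiff_cancel (Set.singleton_subset_iff.mpr hc), ?_⟩
  · exact Set.sdiff_nonempty.mpr fun hsub => hs (Set.Subset.antisymm hsub (by simpa using hc))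
  · rintro a rfl b ⟨hb, hbc⟩
    exact hadj b hb hbc

theorem bp2On_univ_of_compl {A : Set V} (hA : A.Nonempty) (hAc : Aᶜ.Nonempty)
    (h₁ : BP1On G A) (h₂ : BP1On G Aᶜ) : BP2On G Set.univ :=
  .inr ⟨A, Aᶜ, hA, hAc, disjoint_compl_right, Set.union_compl_self A, h₁, h₂⟩

theorem bp2On_univ_of_forall_not_compl_adj {u w : V} (huw : u ≠ w)
    (hno : ∀ x, Gᶜ.Adj u x → ¬ Gᶜ.Adj x w) : BP2On G Set.univ := by
  let A : Set V := {x | x = u ∨ (x ≠ w ∧ G.Adj u x)}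
  have hwA : w ∉ A := by rintro (rfl | ⟨hww, -⟩) <;> contradiction
  refine bp2On_univ_of_compl G (A := A) ⟨u, .inl rfl⟩ ⟨w, hwA⟩ ?_ ?_
  · refine bp1On_of_forall_adj G (c := u) (.inl rfl) ?_
    rintro b (rfl | ⟨-, hub⟩) hbu
    exacts [absurd rfl hbu, hub]
  · refine bp1On_of_forall_adj G hwA fun b hbA hbw => ?_
    have hbu : b ≠ u := fun h => hbA (.inl h)
    have hub : Gᶜ.Adj u b := ⟨hbu.symm, fun h => hbA (.inr ⟨hbw, h⟩)⟩
    exact (not_not.mp fun hG => hno b hub ⟨hbw, hG⟩).symm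

theorem exists_compl_adj_compl_adj_of_not_bp2On_univ (h : ¬ BP2On G Set.univ) (u w : V)
    (huw : u ≠ w) : ∃ x, Gᶜ.Adj u x ∧ Gᶜ.Adj x w := by
  by_contra hc
  exact h (bp2On_univ_of_forall_not_compl_adj G huw fun x hux hxw => hc ⟨x, hux, hxw⟩)

end SimpleGraph

/-- If a finite simple graph `G` on at least three vertices is not in BP2, then the
complement `Gᶜ` is connected and every vertex of `Gᶜ` is at distance at most two from
every other vertex. -/
theorem compl_diameter_le_two {V : Type*} [Fintype V] (G : SimpleGraph V)
    (h3 : 3 ≤ Fintype.card V) (h : ¬ BP2On G Set.univ) :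
    Gᶜ.Connected ∧ ∀ u w : V, Gᶜ.dist u w ≤ 2 := by
  have : Nonempty V := Fintype.card_pos_iff.mp (by omega)
  have hwalk := Gᶜ.exists_walk_length_le_two_of_exists_common_adj
    (G.exists_compl_adj_compl_adj_of_not_bp2On_univ h)
  refine ⟨⟨fun u w => (hwalk u w).elim fun p _ => p.reachable⟩, fun u w => ?_⟩
  obtain ⟨p, hp⟩ := hwalk u w
  exact (SimpleGraph.dist_le p).trans hp
end

section
/- Let G be a finite simple connected graph in BP2 but not in BP1, and let v be a vertex of G such that neither G − v nor G − N_G[v] is in BP1. Let S be the set of all vertices u ∈ N_G(v) such that u is nonadjacent in G to at least one vertex of V(G) ∖ N_G[v]. Then G admits a partition of its vertex set into a star centered at v and a biclique if and only if S ≠ N_G(v); moreover, in that case G[{v} ∪ S] is a star centered at v and G − v − S is in BP1. -/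
/-- The vertex set `P` is (covered by) a star of `G` centered at `v`:
`v ∈ P` and `v` is adjacent in `G` to every other vertex of `P`. -/
def IsStarOn {V : Type*} (G : SimpleGraph V) (v : V) (P : Set V) : Prop :=
  v ∈ P ∧ ∀ u ∈ P, u ≠ v → G.Adj v u

/-!
Write `B` for the vertices outside `N[v]` and `S` for the neighbours of `v` that are not
complete to `B`; `B` is nonempty because `N[v]` itself is a biclique and `G` is not in BP1.
If `S ≠ N(v)`, the neighbours outside `S` are complete to `B`, so `N(v) \ S` and `B` form a
biclique on the complement of `{v} ∪ S`. Conversely, in a partition into a star at `v` and a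
biclique `T`, the set `T` contains `B`, and if `S = N(v)` every vertex of `T \ B` has a
non-neighbour in `B`; then both sides of the biclique `T` meet `B`, making `B` a biclique,
which `G - N[v]` is not.
-/

/-- The set `S` of the theorem. -/
def SimpleGraph.incompleteNeighborSet {V : Type*} (G : SimpleGraph V) (v : V) : Set V :=
  {u ∈ G.neighborSet v | ∃ w ∈ ((insert v (G.neighborSet v))ᶜ : Set V), ¬ G.Adj u w}

section

variable {V : Type*} {G : SimpleGraph V}

theorem BP1On.nonempty {s : Set V} (hs : BP1On G s) : s.Nonempty := by
  rcases hs with ⟨t, rfl⟩ | ⟨A, B, ⟨a, ha⟩, -, -, rfl, -⟩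
  · exact Set.singleton_nonempty t
  · exact ⟨a, Or.inl ha⟩

theorem SimpleGraph.incompleteNeighborSet_subset (v : V) :
    G.incompleteNeighborSet v ⊆ G.neighborSet v :=
  fun _ hu => hu.1

theorem bp1On_insert_neighborSet (v : V) : BP1On G (insert v (G.neighborSet v)) := by
  rcases (G.neighborSet v).eq_empty_or_nonempty with hN | hN
  · exact Or.inl ⟨v, by rw [hN, insert_empty_eq]⟩
  · refine Or.inr ⟨{v}, G.neighborSet v, Set.singleton_nonempty v, hN, ?_,
      Set.singleton_union, fun a ha b hb => (Set.mem_singleton_iff.mp ha) ▸ hb⟩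
    simp

theorem compl_insert_neighborSet_nonempty (hG : ¬ BP1On G Set.univ) (v : V) :
    ((insert v (G.neighborSet v))ᶜ : Set V).Nonempty := by
  rw [Set.nonempty_compl]
  rintro hv
  exact hG (hv ▸ bp1On_insert_neighborSet v)

theorem isStarOn_insert {v : V} {S : Set V} (hS : S ⊆ G.neighborSet v) :
    IsStarOn G v (insert v S) :=
  ⟨Set.mem_insert v S, fun _ hu huv => hS (hu.resolve_left huv)⟩

theorem compl_insert_eq_diff_union {v : V} {S : Set V} (hS : S ⊆ G.neighborSet v) :
    ((insert v S)ᶜ : Set V) = (G.neighborSet v \ S) ∪ (insert v (G.neighborSet v))ᶜ := by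
  ext x
  by_cases hvx : G.Adj v x
  · have hxv : x ≠ v := (G.ne_of_adj hvx).symm
    simp [hvx, hxv]
  · have hxS : x ∉ S := fun h => hvx (hS h)
    simp [hvx, hxS]

theorem bp1On_compl_insert_incompleteNeighborSet {v : V}
    (hB : ((insert v (G.neighborSet v))ᶜ : Set V).Nonempty)
    (hne : G.incompleteNeighborSet v ≠ G.neighborSet v) :
    BP1On G ((insert v (G.incompleteNeighborSet v))ᶜ : Set V) := by
  have hsub := G.incompleteNeighborSet_subset v
  obtain ⟨u, huN, huS⟩ := Set.exists_of_ssubset (hsub.ssubset_of_ne hne)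
  refine Or.inr ⟨G.neighborSet v \ G.incompleteNeighborSet v, _, ⟨u, huN, huS⟩, hB, ?_,
    (compl_insert_eq_diff_union hsub).symm, fun a ha b hb => ?_⟩
  · exact Set.disjoint_of_subset_left
      (Set.sdiff_subset.trans (Set.subset_insert _ _)) disjoint_compl_right
  · by_contra hab
    exact ha.2 ⟨ha.1, b, hb, hab⟩

theorem inter_nonempty_of_forall_exists_not_adj {X Y B : Set V} (hX : X.Nonempty)
    (hB : B ⊆ X ∪ Y) (hXB : ∀ x ∈ X, x ∉ B → ∃ w ∈ B, ¬ G.Adj x w)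
    (hXY : ∀ a ∈ X, ∀ b ∈ Y, G.Adj a b) : (X ∩ B).Nonempty := by
  obtain ⟨x, hx⟩ := hX
  by_cases hxB : x ∈ B
  · exact ⟨x, hx, hxB⟩
  obtain ⟨w, hwB, hxw⟩ := hXB x hx hxB
  rcases hB hwB with hwX | hwY
  · exact ⟨w, hwX, hwB⟩
  · exact absurd (hXY x hx w hwY) hxw

theorem BP1On.of_subset_of_forall_exists_not_adj {T B : Set V} (hT : BP1On G T)
    (hB : B.Nonempty) (hBT : B ⊆ T) (hTB : ∀ x ∈ T, x ∉ B → ∃ w ∈ B, ¬ G.Adj x w) :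
    BP1On G B := by
  rcases hT with ⟨t, rfl⟩ | ⟨X, Y, hX, hY, hXY, rfl, hadj⟩
  · exact Or.inl ⟨t, hB.subset_singleton_iff.mp hBT⟩
  · refine Or.inr ⟨X ∩ B, Y ∩ B, ?_, ?_,
      hXY.mono Set.inter_subset_left Set.inter_subset_left,
      by rw [← Set.union_inter_distrib_right, Set.inter_eq_right.mpr hBT],
      fun a ha b hb => hadj a ha.1 b hb.1⟩
    · exact inter_nonempty_of_forall_exists_not_adj hX hBT
        (fun x hx => hTB x (Or.inl hx)) hadj
    · exact inter_nonempty_of_forall_exists_not_adj hY (Set.union_comm X Y ▸ hBT)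
        (fun x hx => hTB x (Or.inr hx)) (fun a ha b hb => (hadj b hb a ha).symm)

theorem incompleteNeighborSet_ne_of_partition {v : V}
    (hB : ((insert v (G.neighborSet v))ᶜ : Set V).Nonempty)
    (hv : ¬ BP1On G ((insert v (G.neighborSet v))ᶜ : Set V)) {P T : Set V}
    (hPT : Disjoint P T) (hPT_union : P ∪ T = Set.univ) (hP : IsStarOn G v P)
    (hT : BP1On G T) : G.incompleteNeighborSet v ≠ G.neighborSet v := by
  intro hS
  have hvT : v ∉ T := Set.disjoint_left.mp hPT hP.1
  have hBT : ((insert v (G.neighborSet v))ᶜ : Set V) ⊆ T := by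
    intro x hx
    refine (hPT_union.symm ▸ Set.mem_univ x : x ∈ P ∪ T).resolve_left fun hxP => hx ?_
    by_cases hxv : x = v
    · exact Or.inl hxv
    · exact Or.inr (hP.2 x hxP hxv)
  refine hv (hT.of_subset_of_forall_exists_not_adj hB hBT fun x hxT hxB => ?_)
  have hxN : x ∈ G.neighborSet v :=
    (Set.notMem_compl_iff.mp hxB).resolve_left fun hxv => hvT (hxv ▸ hxT)
  exact (hS ▸ hxN : x ∈ G.incompleteNeighborSet v).2

end

theorem star_biclique_partition_iff_general {V : Type*} (G : SimpleGraph V)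
    (hnbp1 : ¬ BP1On G Set.univ) (v : V)
    (hv2 : ¬ BP1On G ((insert v (G.neighborSet v))ᶜ : Set V))
    (S : Set V)
    (hS : S = {u ∈ G.neighborSet v |
      ∃ w ∈ ((insert v (G.neighborSet v))ᶜ : Set V), ¬ G.Adj u w}) :
    ((∃ P T : Set V, P.Nonempty ∧ T.Nonempty ∧ Disjoint P T ∧ P ∪ T = Set.univ ∧
        IsStarOn G v P ∧ BP1On G T) ↔ S ≠ G.neighborSet v) ∧
    (S ≠ G.neighborSet v →
      IsStarOn G v (insert v S) ∧ BP1On G ((insert v S)ᶜ : Set V)) := by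
  change S = G.incompleteNeighborSet v at hS
  subst hS
  have hB := compl_insert_neighborSet_nonempty hnbp1 v
  have moreover : G.incompleteNeighborSet v ≠ G.neighborSet v →
      IsStarOn G v (insert v (G.incompleteNeighborSet v)) ∧
        BP1On G ((insert v (G.incompleteNeighborSet v))ᶜ : Set V) := fun hne =>
    ⟨isStarOn_insert (G.incompleteNeighborSet_subset v),
      bp1On_compl_insert_incompleteNeighborSet hB hne⟩
  refine ⟨⟨?_, fun hne => ?_⟩, moreover⟩
  · rintro ⟨P, T, -, -, hPT, hPT_union, hP, hT⟩
    exact incompleteNeighborSet_ne_of_partition hB hv2 hPT hPT_union hP hT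
  · obtain ⟨hstar, hbic⟩ := moreover hne
    exact ⟨_, _, ⟨v, hstar.1⟩, hbic.nonempty, disjoint_compl_right, Set.union_compl_self _,
      hstar, hbic⟩

/-- Let `G` be a connected graph in BP2 but not in BP1 and let `v` be a vertex such that
neither `G - v` nor `G - N[v]` is in BP1.  Let `S` be the set of neighbours of `v` that
are nonadjacent to at least one vertex outside `N[v]`.  Then `G` admits a partition into
a star centered at `v` and a biclique if and only if `S ≠ N_G(v)`; moreover, in that case
`{v} ∪ S` is a star centered at `v` and `G - v - S` is in BP1. -/
theorem star_biclique_partition_iff {V : Type*} [Fintype V] (G : SimpleGraph V)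
    (hconn : G.Connected)
    (hbp2 : BP2On G Set.univ) (hnbp1 : ¬ BP1On G Set.univ) (v : V)
    (hv1 : ¬ BP1On G ({v}ᶜ : Set V))
    (hv2 : ¬ BP1On G ((insert v (G.neighborSet v))ᶜ : Set V))
    (S : Set V)
    (hS : S = {u ∈ G.neighborSet v |
      ∃ w ∈ ((insert v (G.neighborSet v))ᶜ : Set V), ¬ G.Adj u w}) :
    ((∃ P T : Set V, P.Nonempty ∧ T.Nonempty ∧ Disjoint P T ∧ P ∪ T = Set.univ ∧
        IsStarOn G v P ∧ BP1On G T) ↔ S ≠ G.neighborSet v) ∧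
    (S ≠ G.neighborSet v →
      IsStarOn G v (insert v S) ∧ BP1On G ((insert v S)ᶜ : Set V)) :=
  star_biclique_partition_iff_general G hnbp1 v hv2 S hS
end
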